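/- Fix $m>0$, $J \in \mathbb{R}$, and let $f:[m/2,\infty)\to\mathbb{R}$ be $C^1$. Define $P_J = 2\int_{m/2}^{\infty} \frac{m\,\alpha(r)}{4\, r^2\, \psi_0(r)^7} \int_{-1}^{1}\Big[f'(r)^2(1-z^2)^2 + \frac{(1-z^2)\,(4 f(r) z + 3J)^2}{r^2}\Big]dz\, dr$, assuming this improper integral converges. Then $P_J \ge \frac{J^2}{4 m^2}$. -/

import Mathlib

/-- `ψ₀(r) = 1 + m/(2r)`. -/
noncomputable def psi0 (m r : ℝ) : ℝ := 1 + m / (2 * r)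

/-- `α(r) = 1 - m/(2r)`. -/
noncomputable def alphaF (m r : ℝ) : ℝ := 1 - m / (2 * r)

/-- The improper integral `∫_a^∞ f` converges and equals `L`. -/
def ImproperEq (f : ℝ → ℝ) (a L : ℝ) : Prop :=
  (∀ b : ℝ, IntervalIntegrable f MeasureTheory.volume a b) ∧
    Filter.Tendsto (fun b : ℝ => ∫ r in a..b, f r) Filter.atTop (nhds L)

/-!
Expanding the square, `(4 f z + 3 J)² ≥ 24 f J z + 9 J²`; against the weight `1 - z²` on
`[-1, 1]` the odd term integrates to zero and the constant one to `12 J²`, so the `z`-integral is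
at least `12 J² / r²`. In closed form the radial weight times `12 J² / r²` is
`6 m J² r² (r - m/2) / (r + m/2)⁷`, the derivative of `-2 m J² r³ / (r + m/2)⁶`, which vanishes
at infinity and equals `-J² / (4 m²)` at `r = m/2`.
-/

open Filter Set Topology intervalIntegral

theorem ImproperEq.sub_le_of_hasDerivAt {f H h : ℝ → ℝ} {a L l : ℝ} (hf : ImproperEq f a L)
    (hcont : ContinuousOn H (Ici a)) (hderiv : ∀ x > a, HasDerivAt H (h x) x)
    (hle : ∀ x > a, h x ≤ f x) (hlim : Tendsto H atTop (𝓝 l)) :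
    l - H a ≤ L := by
  refine le_of_tendsto_of_tendsto (hlim.sub_const (H a)) hf.2 ?_
  filter_upwards [eventually_ge_atTop a] with b hab
  exact sub_le_integral_of_hasDeriv_right_of_le hab (hcont.mono Icc_subset_Ici_self)
    (fun x hx => (hderiv x hx.1).hasDerivWithinAt)
    ((intervalIntegrable_iff_integrableOn_Icc_of_le hab).1 (hf.1 b)) (fun x hx => hle x hx.1)

theorem integral_one_sub_sq_mul_linear (a b : ℝ) :
    ∫ z in (-1 : ℝ)..1, (1 - z ^ 2) * (a * z + b) = 4 * b / 3 := by
  have hprim : ∀ z : ℝ, HasDerivAt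
      (fun z => a * (z ^ 2 / 2 - z ^ 4 / 4) + b * (z - z ^ 3 / 3)) ((1 - z ^ 2) * (a * z + b)) z := by
    intro z
    have h : HasDerivAt (_ : ℝ → ℝ) _ z :=
      (((hasDerivAt_pow 2 z).div_const 2).sub ((hasDerivAt_pow 4 z).div_const 4)).const_mul a
        |>.add (((hasDerivAt_id' z).sub ((hasDerivAt_pow 3 z).div_const 3)).const_mul b)
    convert h using 1
    · rfl
    · norm_num
      ring
  rw [integral_eq_sub_of_hasDerivAt (fun z _ => hprim z)
    ((by fun_prop : Continuous _).intervalIntegrable _ _)]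
  ring

theorem le_angular_integral (A F J r : ℝ) (hA : 0 ≤ A) :
    12 * J ^ 2 / r ^ 2 ≤
      ∫ z in (-1 : ℝ)..1, (A * (1 - z ^ 2) ^ 2 + (1 - z ^ 2) * (4 * F * z + 3 * J) ^ 2 / r ^ 2) := by
  calc 12 * J ^ 2 / r ^ 2
      = ∫ z in (-1 : ℝ)..1, (1 - z ^ 2) * (24 * F * J / r ^ 2 * z + 9 * J ^ 2 / r ^ 2) := by
        rw [integral_one_sub_sq_mul_linear]; ring
    _ ≤ _ := by
      refine integral_mono_on (by norm_num)
        ((by fun_prop : Continuous _).intervalIntegrable _ _)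
        ((by fun_prop : Continuous _).intervalIntegrable _ _) fun z hz => ?_
      have h1 : 0 ≤ 1 - z ^ 2 := by nlinarith [hz.1, hz.2]
      have : 0 ≤ A * (1 - z ^ 2) ^ 2 + (1 - z ^ 2) * (16 * F ^ 2 * z ^ 2) / r ^ 2 := by positivity
      linarith [show A * (1 - z ^ 2) ^ 2 + (1 - z ^ 2) * (4 * F * z + 3 * J) ^ 2 / r ^ 2 -
          (1 - z ^ 2) * (24 * F * J / r ^ 2 * z + 9 * J ^ 2 / r ^ 2) =
          A * (1 - z ^ 2) ^ 2 + (1 - z ^ 2) * (16 * F ^ 2 * z ^ 2) / r ^ 2 by ring]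

theorem hasDerivAt_neg_pow_three_div_pow_six {c r : ℝ} (hr : r + c ≠ 0) :
    HasDerivAt (fun r => -(r ^ 3 / (r + c) ^ 6)) (3 * r ^ 2 * (r - c) / (r + c) ^ 7) r := by
  have h : HasDerivAt (_ : ℝ → ℝ) _ r :=
    ((hasDerivAt_pow 3 r).div (((hasDerivAt_id' r).add_const c).pow 6) (pow_ne_zero 6 hr)).neg
  convert h using 1
  · rfl
  · simp only [Pi.pow_apply]
    norm_num
    field_simp
    ring

theorem tendsto_pow_three_div_pow_six {c : ℝ} (hc : 0 ≤ c) :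
    Tendsto (fun r : ℝ => r ^ 3 / (r + c) ^ 6) atTop (𝓝 0) := by
  have hinv : Tendsto (fun r : ℝ => (r ^ 3)⁻¹) atTop (𝓝 0) :=
    tendsto_inv_atTop_zero.comp (tendsto_pow_atTop (by norm_num))
  refine tendsto_of_tendsto_of_tendsto_of_le_of_le' tendsto_const_nhds hinv ?_ ?_
  all_goals filter_upwards [eventually_gt_atTop 0] with r hr
  · positivity
  · rw [div_le_iff₀ (by positivity), inv_mul_eq_div, le_div_iff₀ (by positivity)]
    calc r ^ 3 * r ^ 3 = r ^ 6 := by ring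
      _ ≤ (r + c) ^ 6 := by gcongr; linarith

theorem mul_alphaF_div_psi0_pow_eq (m r : ℝ) (hr : 0 < r) (hm : 0 ≤ m) :
    m * alphaF m r / (4 * r ^ 2 * psi0 m r ^ 7) =
      m * r ^ 4 * (r - m / 2) / (4 * (r + m / 2) ^ 7) := by
  have : 2 * r + m ≠ 0 := by positivity
  unfold alphaF psi0
  field_simp

theorem le_radial_weight_mul_angular_integral {m r : ℝ} (hm : 0 ≤ m) (hr : m / 2 < r)
    (J F : ℝ) {A : ℝ} (hA : 0 ≤ A) :
    2 * m * J ^ 2 * (3 * r ^ 2 * (r - m / 2) / (r + m / 2) ^ 7) ≤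
      2 * (m * alphaF m r / (4 * r ^ 2 * psi0 m r ^ 7)) *
        ∫ z in (-1 : ℝ)..1, (A * (1 - z ^ 2) ^ 2 + (1 - z ^ 2) * (4 * F * z + 3 * J) ^ 2 / r ^ 2) := by
  have hr0 : 0 < r := by linarith
  have hrm : 0 ≤ r - m / 2 := by linarith
  rw [mul_alphaF_div_psi0_pow_eq m r hr0 hm]
  calc 2 * m * J ^ 2 * (3 * r ^ 2 * (r - m / 2) / (r + m / 2) ^ 7)
      = 2 * (m * r ^ 4 * (r - m / 2) / (4 * (r + m / 2) ^ 7)) * (12 * J ^ 2 / r ^ 2) := by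
        field_simp
        ring
    _ ≤ _ := by
        gcongr
        exact le_angular_integral A F J r hA

theorem PJ_lower_bound_general (m : ℝ) (hm : 0 < m) (J : ℝ)
    (f : ℝ → ℝ)
    (PJ : ℝ)
    (hPJ : ImproperEq
      (fun r : ℝ => 2 * (m * alphaF m r / (4 * r ^ 2 * (psi0 m r) ^ 7)) *
        ∫ z in (-1 : ℝ)..1,
          ((deriv f r) ^ 2 * (1 - z ^ 2) ^ 2
            + (1 - z ^ 2) * (4 * f r * z + 3 * J) ^ 2 / r ^ 2))
      (m / 2) PJ) :
    PJ ≥ J ^ 2 / (4 * m ^ 2) := by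
  have hprim : ∀ r ≥ m / 2, HasDerivAt (fun r => 2 * m * J ^ 2 * -(r ^ 3 / (r + m / 2) ^ 6))
      (2 * m * J ^ 2 * (3 * r ^ 2 * (r - m / 2) / (r + m / 2) ^ 7)) r := fun r hr =>
    (hasDerivAt_neg_pow_three_div_pow_six (by linarith)).const_mul _
  have hlim : Tendsto (fun r => 2 * m * J ^ 2 * -(r ^ 3 / (r + m / 2) ^ 6)) atTop (𝓝 0) := by
    simpa using ((tendsto_pow_three_div_pow_six (by positivity : 0 ≤ m / 2)).neg.const_mul
      (2 * m * J ^ 2))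
  calc J ^ 2 / (4 * m ^ 2) = 0 - 2 * m * J ^ 2 * -((m / 2) ^ 3 / (m / 2 + m / 2) ^ 6) := by
        field_simp
        ring
    _ ≤ PJ := hPJ.sub_le_of_hasDerivAt (fun r hr => (hprim r hr).continuousAt.continuousWithinAt)
        (fun r hr => hprim r hr.le)
        (fun r hr => le_radial_weight_mul_angular_integral hm.le hr J (f r) (sq_nonneg _)) hlim

/-- Estimate (52): the angular momentum contribution satisfies `P_J ≥ J²/(4m²)`. -/
theorem PJ_lower_bound (m : ℝ) (hm : 0 < m) (J : ℝ)
    (f : ℝ → ℝ) (hf : ContDiffOn ℝ 1 f (Set.Ici (m / 2)))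
    (PJ : ℝ)
    (hPJ : ImproperEq
      (fun r : ℝ => 2 * (m * alphaF m r / (4 * r ^ 2 * (psi0 m r) ^ 7)) *
        ∫ z in (-1 : ℝ)..1,
          ((deriv f r) ^ 2 * (1 - z ^ 2) ^ 2
            + (1 - z ^ 2) * (4 * f r * z + 3 * J) ^ 2 / r ^ 2))
      (m / 2) PJ) :
    PJ ≥ J ^ 2 / (4 * m ^ 2) :=
  PJ_lower_bound_general m hm J f PJ hPJ
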